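/- Let c be a job-scheduling instance with m machines and n jobs and let A be an allocation that minimizes the makespan, and, among all allocations whose makespan is at most the makespan of A, minimizes the total cost Σ_{i ∈ Fin m} c_i(A_i). Then there exists a machine j ∈ Fin m such that c_i(A_i) ≤ c_j(A_i) for every machine i ∈ Fin m. -/

import Mathlib

open Finset

noncomputable section

/-- The cost to machine `i` of the bundle of jobs assigned to machine `k` under allocation `A`. -/
def bundleCost {m n : ℕ} (c : Fin m → Fin n → ℝ) (A : Fin n → Fin m) (i k : Fin m) : ℝ :=
  ∑ j ∈ Finset.univ.filter (fun j => A j = k), c i j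

/-- The total cost to machine `i` of all jobs, `c_i([n])`. -/
def rowSum {m n : ℕ} (c : Fin m → Fin n → ℝ) (i : Fin m) : ℝ :=
  ∑ j, c i j

/-- The makespan of allocation `A`: the maximum cost of any machine. -/
def makespan {m n : ℕ} (hm : 0 < m) (c : Fin m → Fin n → ℝ) (A : Fin n → Fin m) : ℝ :=
  (Finset.univ : Finset (Fin m)).sup' ⟨⟨0, hm⟩, Finset.mem_univ _⟩ fun i => bundleCost c A i i

/-- The optimal (minimum) makespan over all allocations. -/
def OPT {m n : ℕ} (hm : 0 < m) (c : Fin m → Fin n → ℝ) : ℝ :=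
  (Finset.univ : Finset (Fin n → Fin m)).inf' ⟨fun _ => ⟨0, hm⟩, Finset.mem_univ _⟩
    fun X => makespan hm c X

/-- If `A` minimizes the makespan and, subject to that, minimizes the total cost, then some
machine `j` is weakly less efficient than every machine on that machine's own bundle. -/
theorem stmt_7 {m n : ℕ} (hm : 2 ≤ m) (hn : 2 ≤ n)
    (c : Fin m → Fin n → ℝ) (hc : ∀ i j, 0 ≤ c i j) (A : Fin n → Fin m)
    (hopt : ∀ X : Fin n → Fin m, makespan (by omega) c A ≤ makespan (by omega) c X)
    (hmin : ∀ X : Fin n → Fin m, makespan (by omega) c X ≤ makespan (by omega) c A →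
      ∑ i : Fin m, bundleCost c A i i ≤ ∑ i : Fin m, bundleCost c X i i) :
    ∃ j : Fin m, ∀ i : Fin m, bundleCost c A i i ≤ bundleCost c A j i := by
  have hm0 : 0 < m := by omega
  classical
  by_contra hcon
  push_neg at hcon
  choose f hf using hcon
  -- find a periodic point of f
  obtain ⟨a, b, hab, heq⟩ :
      ∃ a b : Fin (m + 1), a ≠ b ∧ f^[a.val] ⟨0, hm0⟩ = f^[b.val] ⟨0, hm0⟩ := by
    obtain ⟨a, b, hab, heq⟩ := Fintype.exists_ne_map_eq_of_card_lt
      (fun t : Fin (m + 1) => f^[t.val] ⟨0, hm0⟩) (by simp)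
    exact ⟨a, b, hab, heq⟩
  wlog hlt : a.val < b.val generalizing a b
  · have hne : a.val ≠ b.val := Fin.val_ne_of_ne hab
    exact this b a hab.symm heq.symm (by omega)
  set p : Fin m := f^[a.val] ⟨0, hm0⟩ with hp
  set per : ℕ := b.val - a.val with hper_def
  have hpos : 0 < per := by omega
  have hper : f^[per] p = p := by
    rw [hp, ← Function.iterate_add_apply, Nat.sub_add_cancel hlt.le, ← heq]
  set S : Finset (Fin m) := Finset.univ.filter (fun q => ∃ t, f^[t] p = q) with hS
  have hpS : p ∈ S := by simp [hS]; exact ⟨0, rfl⟩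
  have hS_iter : ∀ q ∈ S, ∀ s, f^[s] q ∈ S := by
    intro q hq s
    simp only [hS, Finset.mem_filter, Finset.mem_univ, true_and] at hq ⊢
    obtain ⟨t, rfl⟩ := hq
    exact ⟨s + t, (Function.iterate_add_apply f s t p)⟩
  have hfS : ∀ q ∈ S, f q ∈ S := fun q hq => hS_iter q hq 1
  have hfix : ∀ q ∈ S, f^[per] q = q := by
    intro q hq
    simp only [hS, Finset.mem_filter, Finset.mem_univ, true_and] at hq
    obtain ⟨t, rfl⟩ := hq
    rw [← Function.iterate_add_apply, Nat.add_comm, Function.iterate_add_apply, hper]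
  set g : Fin m → Fin m := fun k => if k ∈ S then f^[per - 1] k else k with hg
  set X : Fin n → Fin m := fun j => g (A j) with hX
  have hgmem : ∀ q ∈ S, g q ∈ S := by
    intro q hq
    simp only [hg, if_pos hq]
    exact hS_iter q hq _
  have hfg : ∀ q ∈ S, f (g q) = q := by
    intro q hq
    simp only [hg, if_pos hq]
    rw [← Function.iterate_succ_apply' f (per - 1) q,
      show (per - 1).succ = per by omega]
    exact hfix q hq
  have hgf : ∀ q ∈ S, g (f q) = q := by
    intro q hq
    simp only [hg, if_pos (hfS q hq)]
    rw [← Function.iterate_succ_apply f (per - 1) q,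
      show (per - 1).succ = per by omega]
    exact hfix q hq
  -- cost of each machine under X
  have hXcost : ∀ i : Fin m,
      bundleCost c X i i = if i ∈ S then bundleCost c A i (f i) else bundleCost c A i i := by
    intro i
    by_cases hi : i ∈ S
    · rw [if_pos hi]
      unfold bundleCost
      apply Finset.sum_congr _ (fun _ _ => rfl)
      ext j
      simp only [Finset.mem_filter, Finset.mem_univ, true_and, hX]
      constructor
      · intro h
        by_cases hAj : A j ∈ S
        · have := hfg (A j) hAj
          rw [h] at this
          rw [← this]
        · simp only [hg, if_neg hAj] at h
          exact absurd (h ▸ hi) hAj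
      · intro h
        rw [h]
        exact hgf i hi
    · rw [if_neg hi]
      unfold bundleCost
      apply Finset.sum_congr _ (fun _ _ => rfl)
      ext j
      simp only [Finset.mem_filter, Finset.mem_univ, true_and, hX]
      constructor
      · intro h
        by_cases hAj : A j ∈ S
        · exact absurd (h ▸ hgmem (A j) hAj) hi
        · simpa [hg, if_neg hAj] using h
      · intro h
        have hAj : A j ∉ S := h ▸ hi
        simpa [hg, if_neg hAj] using h
  -- makespan of X is at most makespan of A
  have hms : makespan hm0 c X ≤ makespan hm0 c A := by
    apply Finset.sup'_le
    intro i _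
    rw [hXcost i]
    by_cases hi : i ∈ S
    · rw [if_pos hi]
      calc bundleCost c A i (f i) ≤ bundleCost c A (f i) (f i) := (hf i).le
        _ ≤ makespan hm0 c A :=
          Finset.le_sup' (f := fun i => bundleCost c A i i) (Finset.mem_univ (f i))
    · rw [if_neg hi]
      exact Finset.le_sup' (f := fun i => bundleCost c A i i) (Finset.mem_univ i)
  -- total cost strictly decreases
  have hsumS : ∑ i ∈ S, bundleCost c A (f i) (f i) = ∑ i ∈ S, bundleCost c A i i := by
    apply Finset.sum_nbij' (i := fun q => f q) (j := fun q => g q)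
    · exact fun q hq => hfS q hq
    · exact fun q hq => hgmem q hq
    · exact fun q hq => hgf q hq
    · exact fun q hq => hfg q hq
    · exact fun q hq => rfl
  have hstrict : ∑ i : Fin m, bundleCost c X i i < ∑ i : Fin m, bundleCost c A i i := by
    rw [← Finset.sum_filter_add_sum_filter_not Finset.univ (fun i => i ∈ S),
        ← Finset.sum_filter_add_sum_filter_not Finset.univ (fun i => i ∈ S)
          (fun i => bundleCost c A i i)]
    have h2 : ∑ i ∈ Finset.univ.filter (fun i => i ∉ S), bundleCost c X i i
        = ∑ i ∈ Finset.univ.filter (fun i => i ∉ S), bundleCost c A i i := by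
      apply Finset.sum_congr rfl
      intro i hi
      simp only [Finset.mem_filter] at hi
      rw [hXcost i, if_neg hi.2]
    rw [h2]
    refine add_lt_add_of_lt_of_le ?_ le_rfl
    have hSfilter : Finset.univ.filter (fun i => i ∈ S) = S := by
      ext q; simp
    rw [hSfilter]
    calc ∑ i ∈ S, bundleCost c X i i = ∑ i ∈ S, bundleCost c A i (f i) := by
          apply Finset.sum_congr rfl
          intro i hi
          rw [hXcost i, if_pos hi]
      _ < ∑ i ∈ S, bundleCost c A (f i) (f i) :=
          Finset.sum_lt_sum_of_nonempty ⟨p, hpS⟩ (fun i _ => hf i)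
      _ = ∑ i ∈ S, bundleCost c A i i := hsumS
  exact absurd (hmin X hms) (not_le.mpr hstrict)
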